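/- arXiv:1911.11640 — 6 statements merged into one kernel-verified Lean document; each statement's English description precedes it below -/
import Mathlib

section
/- For any two policies π and π̃ on a finite-state discounted MDP, the total expected reward satisfies η(π̃) = η(π) + Σ_s ρ_{π̃}(s) Σ_a π̃(a|s) A_π(s,a), where ρ_{π̃} is the unnormalized discounted visitation frequency of π̃ and A_π is the advantage function of π. -/
open scoped BigOperators

section MDPdefs

variable (S A : Type) [Fintype S] [Fintype A]

structure MDP where
  P : S → A → S → ℝ
  r : S → A → ℝ
  ρ0 : S → ℝ
  γ : ℝ

variable {S A}

def IsPolicy (π : S → A → ℝ) : Prop :=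
  (∀ s a, 0 ≤ π s a) ∧ ∀ s, ∑ a, π s a = 1

def MDP.Valid (M : MDP S A) : Prop :=
  (∀ s a s', 0 ≤ M.P s a s') ∧ (∀ s a, ∑ s', M.P s a s' = 1) ∧
  (∀ s, 0 ≤ M.ρ0 s) ∧ (∑ s, M.ρ0 s = 1) ∧ 0 < M.γ ∧ M.γ < 1

/-- Distribution of the state at time `t` when the initial state follows `ρ0`
and the trajectory follows policy `π`. -/
noncomputable def MDP.stateDist (M : MDP S A) (π : S → A → ℝ) : ℕ → S → ℝ
  | 0 => M.ρ0
  | (t+1) => fun s' => ∑ s, ∑ a, M.stateDist π t s * π s a * M.P s a s'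

/-- The unnormalized discounted visitation frequency `ρ_π`. -/
noncomputable def MDP.ρvisit (M : MDP S A) (π : S → A → ℝ) (s : S) : ℝ :=
  ∑' t : ℕ, M.γ ^ t * M.stateDist π t s

/-- The total expected discounted reward `η(π)`. -/
noncomputable def MDP.η (M : MDP S A) (π : S → A → ℝ) : ℝ :=
  ∑' t : ℕ, M.γ ^ t * ∑ s, M.stateDist π t s * ∑ a, π s a * M.r s a

/-- Distribution of the state at time `t` starting deterministically from `s0`. -/
noncomputable def MDP.distFrom [DecidableEq S] (M : MDP S A) (π : S → A → ℝ) (s0 : S) :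
    ℕ → S → ℝ
  | 0 => fun s => if s = s0 then 1 else 0
  | (t+1) => fun s' => ∑ s, ∑ a, M.distFrom π s0 t s * π s a * M.P s a s'

/-- The state value function `V_π`. -/
noncomputable def MDP.V [DecidableEq S] (M : MDP S A) (π : S → A → ℝ) (s0 : S) : ℝ :=
  ∑' t : ℕ, M.γ ^ t * ∑ s, M.distFrom π s0 t s * ∑ a, π s a * M.r s a

/-- The action value function `Q_π`. -/
noncomputable def MDP.Q [DecidableEq S] (M : MDP S A) (π : S → A → ℝ) (s : S) (a : A) : ℝ :=
  M.r s a + M.γ * ∑ s', M.P s a s' * M.V π s'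

/-- The advantage function `A_π`. -/
noncomputable def MDP.Adv [DecidableEq S] (M : MDP S A) (π : S → A → ℝ) (s : S) (a : A) : ℝ :=
  M.Q π s a - M.V π s

end MDPdefs

/-! Write `d_t` for the state distribution of `π'` at time `t` and `Z_t = Σ_s d_t(s) V_π(s)`.
Averaging `A_π(s,a) = r(s,a) + γ Σ_{s'} P(s'|s,a) V_π(s') - V_π(s)` against `π'(·|s)` and `d_t`
gives the expected reward of `π'` at time `t` plus `γ Z_{t+1} - Z_t`. Summed with weights `γ^t`,
the rewards add up to `η(π')` and the rest telescopes to `-Z_0 = -η(π)`. -/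

section Geometric

variable {ι : Type*} [Fintype ι] {γ : ℝ}

theorem norm_sum_mul_le_of_mem_stdSimplex {d : ι → ℝ} (hd : d ∈ stdSimplex ℝ ι) (f : ι → ℝ) :
    ‖∑ i, d i * f i‖ ≤ ‖f‖ :=
  calc ‖∑ i, d i * f i‖ ≤ ∑ i, d i * ‖f‖ := by
        refine (norm_sum_le _ _).trans (Finset.sum_le_sum fun i _ => ?_)
        rw [norm_mul, Real.norm_of_nonneg (hd.1 i)]
        exact mul_le_mul_of_nonneg_left (norm_le_pi_norm f i) (hd.1 i)
    _ = ‖f‖ := by rw [← Finset.sum_mul, hd.2, one_mul]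

theorem summable_geometric_mul_sum_mul (hγ0 : 0 ≤ γ) (hγ1 : γ < 1) {d : ℕ → ι → ℝ}
    (hd : ∀ t, d t ∈ stdSimplex ℝ ι) (f : ι → ℝ) :
    Summable fun t => γ ^ t * ∑ i, d t i * f i := by
  refine ((summable_geometric_of_lt_one hγ0 hγ1).mul_right ‖f‖).of_norm_bounded fun t => ?_
  rw [norm_mul, norm_pow, Real.norm_of_nonneg hγ0]
  exact mul_le_mul_of_nonneg_left (norm_sum_mul_le_of_mem_stdSimplex (hd t) f) (pow_nonneg hγ0 t)

theorem sum_tsum_geometric_mul (hγ0 : 0 ≤ γ) (hγ1 : γ < 1) {d : ℕ → ι → ℝ}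
    (hd : ∀ t, d t ∈ stdSimplex ℝ ι) (f : ι → ℝ) :
    ∑ i, (∑' t, γ ^ t * d t i) * f i = ∑' t, γ ^ t * ∑ i, d t i * f i := by
  have hsum : ∀ i, Summable fun t => γ ^ t * d t i :=
    fun i => (summable_geometric_of_lt_one hγ0 hγ1).of_nonneg_of_le
      (fun t => mul_nonneg (pow_nonneg hγ0 t) ((hd t).1 i))
      (fun t => mul_le_of_le_one_right (pow_nonneg hγ0 t) (mem_Icc_of_mem_stdSimplex (hd t) i).2)
  simp only [← tsum_mul_right, Finset.mul_sum, ← mul_assoc]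
  exact (Summable.tsum_finsetSum fun i _ => (hsum i).mul_right (f i)).symm

end Geometric

namespace MDP

theorem Valid.gamma_nonneg {S A : Type} [Fintype S] {M : MDP S A} (hM : M.Valid) : 0 ≤ M.γ :=
  hM.2.2.2.2.1.le

theorem Valid.gamma_lt_one {S A : Type} [Fintype S] {M : MDP S A} (hM : M.Valid) : M.γ < 1 :=
  hM.2.2.2.2.2

variable {S A : Type} [Fintype S] [Fintype A] (M : MDP S A)

def step (π : S → A → ℝ) (d : S → ℝ) (s' : S) : ℝ :=
  ∑ s, ∑ a, d s * π s a * M.P s a s'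

theorem sum_step_mul (π : S → A → ℝ) (d g : S → ℝ) :
    ∑ s', M.step π d s' * g s' = ∑ s, d s * ∑ a, π s a * ∑ s', M.P s a s' * g s' := by
  simp only [step, Finset.sum_mul, Finset.mul_sum, mul_assoc]
  exact Finset.sum_comm_cycle.symm

theorem step_mem_stdSimplex (hM : M.Valid) {π : S → A → ℝ} (hπ : IsPolicy π) {d : S → ℝ}
    (hd : d ∈ stdSimplex ℝ S) : M.step π d ∈ stdSimplex ℝ S := by
  obtain ⟨hP0, hP1, -⟩ := hM
  refine ⟨fun s' => ?_, ?_⟩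
  · exact Finset.sum_nonneg fun s _ => Finset.sum_nonneg fun a _ =>
      mul_nonneg (mul_nonneg (hd.1 s) (hπ.1 s a)) (hP0 s a s')
  · simpa [hP1, hπ.2, hd.2] using M.sum_step_mul π d 1

theorem stateDist_succ (π : S → A → ℝ) (t : ℕ) :
    M.stateDist π (t + 1) = M.step π (M.stateDist π t) := rfl

theorem distFrom_succ [DecidableEq S] (π : S → A → ℝ) (s0 : S) (t : ℕ) :
    M.distFrom π s0 (t + 1) = M.step π (M.distFrom π s0 t) := rfl

theorem stateDist_mem_stdSimplex (hM : M.Valid) {π : S → A → ℝ} (hπ : IsPolicy π) (t : ℕ) :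
    M.stateDist π t ∈ stdSimplex ℝ S := by
  induction t with
  | zero => exact ⟨hM.2.2.1, hM.2.2.2.1⟩
  | succ t ih => exact M.step_mem_stdSimplex hM hπ ih

theorem distFrom_mem_stdSimplex [DecidableEq S] (hM : M.Valid) {π : S → A → ℝ}
    (hπ : IsPolicy π) (s0 : S) (t : ℕ) : M.distFrom π s0 t ∈ stdSimplex ℝ S := by
  induction t with
  | zero =>
    convert ite_eq_mem_stdSimplex ℝ s0 using 2
    simp [distFrom, eq_comm]
  | succ t ih => exact M.step_mem_stdSimplex hM hπ ih

theorem stateDist_eq_sum_distFrom [DecidableEq S] (π : S → A → ℝ) (t : ℕ) (s : S) :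
    M.stateDist π t s = ∑ s0, M.ρ0 s0 * M.distFrom π s0 t s := by
  induction t generalizing s with
  | zero => simp [stateDist, distFrom]
  | succ t ih =>
    simp only [stateDist_succ, distFrom_succ, step, ih, Finset.sum_mul, Finset.mul_sum, mul_assoc]
    exact Finset.sum_comm_cycle

theorem sum_ρvisit_mul (hM : M.Valid) {π : S → A → ℝ} (hπ : IsPolicy π) (f : S → ℝ) :
    ∑ s, M.ρvisit π s * f s = ∑' t, M.γ ^ t * ∑ s, M.stateDist π t s * f s :=
  sum_tsum_geometric_mul hM.gamma_nonneg hM.gamma_lt_one (M.stateDist_mem_stdSimplex hM hπ) f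

theorem η_eq_sum_ρ0_mul_V [DecidableEq S] (hM : M.Valid) {π : S → A → ℝ} (hπ : IsPolicy π) :
    M.η π = ∑ s0, M.ρ0 s0 * M.V π s0 := by
  have hsum (s0 : S) := summable_geometric_mul_sum_mul hM.gamma_nonneg hM.gamma_lt_one
    (M.distFrom_mem_stdSimplex hM hπ s0) (fun s => ∑ a, π s a * M.r s a)
  simp only [V, ← tsum_mul_left]
  rw [← Summable.tsum_finsetSum fun s0 _ => (hsum s0).mul_left _, η]
  refine tsum_congr fun t => ?_
  simp only [stateDist_eq_sum_distFrom, Finset.sum_mul, Finset.mul_sum, mul_assoc,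
    mul_left_comm (M.γ ^ t)]
  exact Finset.sum_comm_cycle

theorem sum_mul_Adv [DecidableEq S] (π : S → A → ℝ) {π' : S → A → ℝ} {s : S}
    (hπ' : ∑ a, π' s a = 1) :
    ∑ a, π' s a * M.Adv π s a = ∑ a, π' s a * M.r s a
      + M.γ * ∑ a, π' s a * ∑ s', M.P s a s' * M.V π s' - M.V π s := by
  simp only [Adv, Q, mul_sub, mul_add, Finset.sum_sub_distrib, Finset.sum_add_distrib,
    ← Finset.sum_mul, hπ', one_mul, Finset.mul_sum, mul_left_comm _ M.γ]

end MDP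

/-- For any two policies `π` and `π'` on a finite-state discounted MDP,
`η(π') = η(π) + Σ_s ρ_{π'}(s) Σ_a π'(a|s) A_π(s,a)`. -/
theorem stmt0 {S A : Type} [Fintype S] [Fintype A] [DecidableEq S]
    (M : MDP S A) (hM : M.Valid) (π π' : S → A → ℝ)
    (hπ : IsPolicy π) (hπ' : IsPolicy π') :
    M.η π' = M.η π + ∑ s, M.ρvisit π' s * ∑ a, π' s a * M.Adv π s a := by
  set Z : ℕ → ℝ := fun t => ∑ s, M.stateDist π' t s * M.V π s
  have hZ_summable : Summable fun t => M.γ ^ t * Z t := summable_geometric_mul_sum_mul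
    hM.gamma_nonneg hM.gamma_lt_one (M.stateDist_mem_stdSimplex hM hπ') (M.V π)
  have hZ_telescope : M.γ * ∑' t, M.γ ^ t * Z (t + 1) = ∑' t, M.γ ^ t * Z t - Z 0 := by
    rw [hZ_summable.tsum_eq_zero_add, ← tsum_mul_left, pow_zero, one_mul, add_sub_cancel_left]
    exact tsum_congr fun t => by ring
  have hZ_zero : Z 0 = M.η π := (M.η_eq_sum_ρ0_mul_V hM hπ).symm
  have hρ := M.sum_ρvisit_mul hM hπ'
  have hsplit : ∑ s, M.ρvisit π' s * ∑ a, π' s a * M.Adv π s a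
      = ∑ s, M.ρvisit π' s * ∑ a, π' s a * M.r s a
        + M.γ * ∑ s, M.ρvisit π' s * ∑ a, π' s a * ∑ s', M.P s a s' * M.V π s'
        - ∑ s, M.ρvisit π' s * M.V π s := by
    simp only [M.sum_mul_Adv π (hπ'.2 _), mul_sub, mul_add, Finset.sum_sub_distrib,
      Finset.sum_add_distrib, Finset.mul_sum, mul_left_comm _ M.γ]
  have hreward : ∑ s, M.ρvisit π' s * ∑ a, π' s a * M.r s a = M.η π' := hρ _
  have hlookahead : ∑ s, M.ρvisit π' s * ∑ a, π' s a * ∑ s', M.P s a s' * M.V π s'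
      = ∑' t, M.γ ^ t * Z (t + 1) := by
    simp only [hρ, ← M.sum_step_mul]
    rfl
  rw [hsplit, hreward, hlookahead, hρ, hZ_telescope, hZ_zero]
  ring
end

section
/- Suppose η(π_{k+1}) ≥ L_{π_k}(π_{k+1}) − 4Āγα²/(1−γ)² with α = max_s D_TV(π_k(·|s), π_{k+1}(·|s)), and L_{π_k}(π_{k+1}) − L_{π_k}(π_k) ≥ min(1,(1−γ)δ_k)·A*_{π_k} > 0, and E_{s∼ρ_{π_k}}[D_TV(π_k(·|s), π_{k+1}(·|s))] ≤ δ_k with ρ_{π_k}(s) ≥ p_0 > 0 for all s. Then the trust region ratio r_k = (η(π_{k+1}) − η(π_k)) / (L_{π_k}(π_{k+1}) − L_{π_k}(π_k)) satisfies r_k ≥ 1 − 4Āγδ_k² / (p_0²(1−γ)² min(1,(1−γ)δ_k) A*_{π_k}). -/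
open scoped BigOperators

/-- Total variation distance between two distributions on a finite action set. -/
noncomputable def DTV {A : Type} [Fintype A] (p q : A → ℝ) : ℝ :=
  (1/2) * ∑ a, |p a - q a|

/-!
The TRPO bound penalises the surrogate improvement by `4Āγα²/(1-γ)²`, where `α` is the
*maximal* total variation between the two policies. Since every state has weight at least `p₀`
under `ρ`, the maximum is controlled by the average, `p₀ α ≤ 𝔼_ρ D_TV ≤ δ`, so the penalty is
at most `4Āγδ²/(p₀²(1-γ)²)`. Dividing by the surrogate improvement, which is at least
`min(1, (1-γ)δ) A* > 0`, gives the bound on the ratio.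
-/

theorem DTV_nonneg {A : Type} [Fintype A] (p q : A → ℝ) : 0 ≤ DTV p q := by
  unfold DTV
  positivity

theorem Finset.mul_sup'_le_sum_mul {ι : Type*} {s : Finset ι} (hs : s.Nonempty) {f w : ι → ℝ}
    {c : ℝ} (hc : 0 ≤ c) (hw : ∀ i ∈ s, c ≤ w i) (hf : ∀ i ∈ s, 0 ≤ f i) :
    c * s.sup' hs f ≤ ∑ i ∈ s, w i * f i := by
  obtain ⟨i, hi, hmax⟩ := s.exists_mem_eq_sup' hs f
  calc c * s.sup' hs f = c * f i := by rw [hmax]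
    _ ≤ w i * f i := mul_le_mul_of_nonneg_right (hw i hi) (hf i hi)
    _ ≤ ∑ j ∈ s, w j * f j :=
      s.single_le_sum (fun j hj => mul_nonneg (hc.trans (hw j hj)) (hf j hj)) hi

theorem one_sub_div_le_div_of_sub_le {x D C m : ℝ} (hm : 0 < m) (hmD : m ≤ D) (hC : 0 ≤ C)
    (hx : D - C ≤ x) : 1 - C / m ≤ x / D := by
  have hD : 0 < D := hm.trans_le hmD
  calc 1 - C / m ≤ 1 - C / D := by gcongr
    _ = (D - C) / D := by field_simp
    _ ≤ x / D := by gcongr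

theorem stmt9_general {S A : Type} [Fintype S] [Fintype A] [Nonempty S]
    (πk πk1 : S → A → ℝ) (ρ : S → ℝ)
    (ηk ηk1 Lk Lk1 δ Abar γ p0 Astar : ℝ)
    (hγ : 0 < γ ∧ γ < 1) (hp0 : 0 < p0) (hρ : ∀ s, p0 ≤ ρ s)
    (hAbar : 0 ≤ Abar)
    (hLη : Lk = ηk)
    (hsurr : ηk1 ≥ Lk1 - 4 * Abar * γ *
      (Finset.univ.sup' Finset.univ_nonempty (fun s => DTV (πk s) (πk1 s)))^2 / (1 - γ)^2)
    (himp : Lk1 - Lk ≥ min 1 ((1 - γ) * δ) * Astar)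
    (hpos : 0 < min 1 ((1 - γ) * δ) * Astar)
    (hconstr : ∑ s, ρ s * DTV (πk s) (πk1 s) ≤ δ) :
    (ηk1 - ηk) / (Lk1 - Lk) ≥
      1 - 4 * Abar * γ * δ^2 / (p0^2 * (1 - γ)^2 * min 1 ((1 - γ) * δ) * Astar) := by
  set α := Finset.univ.sup' Finset.univ_nonempty (fun s => DTV (πk s) (πk1 s))
  have hα : 0 ≤ α := Finset.le_sup'_of_le _ (Finset.mem_univ (Classical.arbitrary S))
    (DTV_nonneg _ _)
  have hαδ : α ≤ δ / p0 := by
    rw [le_div_iff₀ hp0, mul_comm]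
    exact (Finset.univ.mul_sup'_le_sum_mul _ hp0.le (fun s _ => hρ s)
      (fun s _ => DTV_nonneg _ _)).trans hconstr
  have hγ0 := hγ.1
  have hpenalty :
      4 * Abar * γ * α ^ 2 / (1 - γ) ^ 2 ≤ 4 * Abar * γ * (δ / p0) ^ 2 / (1 - γ) ^ 2 := by
    gcongr
  have hratio : 1 - 4 * Abar * γ * (δ / p0) ^ 2 / (1 - γ) ^ 2 / (min 1 ((1 - γ) * δ) * Astar)
      ≤ (ηk1 - ηk) / (Lk1 - Lk) :=
    one_sub_div_le_div_of_sub_le hpos himp (by positivity) (by linarith)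
  convert hratio using 2
  field_simp

/-- Trust region ratio lower bound in the unparameterized case: under the
TRPO surrogate bound (with `α = max_s D_TV(π_k(·|s), π_{k+1}(·|s))`), the sufficient increase
bound, and the trust region constraint with `ρ_{π_k}(s) ≥ p0 > 0`, the ratio satisfies
`r_k ≥ 1 − 4Āγδ² / (p0²(1−γ)² min(1,(1−γ)δ) A*)`. -/
theorem stmt9 {S A : Type} [Fintype S] [Fintype A] [Nonempty S]
    (πk πk1 : S → A → ℝ) (ρ : S → ℝ)
    (ηk ηk1 Lk Lk1 δ Abar γ p0 Astar : ℝ)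
    (hγ : 0 < γ ∧ γ < 1) (hp0 : 0 < p0) (hρ : ∀ s, p0 ≤ ρ s)
    (hAbar : 0 ≤ Abar) (hδ : 0 < δ)
    (hLη : Lk = ηk)
    (hsurr : ηk1 ≥ Lk1 - 4 * Abar * γ *
      (Finset.univ.sup' Finset.univ_nonempty (fun s => DTV (πk s) (πk1 s)))^2 / (1 - γ)^2)
    (himp : Lk1 - Lk ≥ min 1 ((1 - γ) * δ) * Astar)
    (hpos : 0 < min 1 ((1 - γ) * δ) * Astar)
    (hconstr : ∑ s, ρ s * DTV (πk s) (πk1 s) ≤ δ) :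
    (ηk1 - ηk) / (Lk1 - Lk) ≥
      1 - 4 * Abar * γ * δ^2 / (p0^2 * (1 - γ)^2 * min 1 ((1 - γ) * δ) * Astar) :=
  stmt9_general πk πk1 ρ ηk ηk1 Lk Lk1 δ Abar γ p0 Astar hγ hp0 hρ hAbar hLη hsurr himp hpos hconstr
end

section
/- Consider a sequence of real numbers η_k (objective values) that is monotonically nondecreasing and bounded above, trust-region radii δ_k > 0 updated by δ_{k+1} = γ1 δ_k if r_k ≥ β1, γ2 δ_k if r_k ∈ [β0, β1), γ3 δ_k otherwise (with 0 < γ3 < γ2 ≤ 1 < γ1, 0 < β0 < β1 < 1). Suppose for all k ≥ K: (i) η_{k+1} − η_k ≥ β0 c δ_k whenever r_k ≥ β0 (with c > 0 fixed), and (ii) r_k ≥ 1 − C δ_k for a fixed C > 0. Then δ_k → 0 is impossible while also having δ_k bounded below; consequently the hypotheses lead to a contradiction, i.e., it cannot hold that the per-step improvement bound (i) and the ratio bound (ii) persist with the fixed constant c for all large k. -/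
/-!
Write `δ̄ = (1 - β₁) / C`. Once `k ≥ K`, a radius `δ k ≤ δ̄` forces `r k ≥ β₁`, so the radius
grows; since it never shrinks by more than the factor `γ₃`, it stays above
`min (δ K) (γ₃ δ̄)`. An iteration with `r k < β₀` needs `δ k > δ̄`, so unsuccessful iterations
cannot go on forever (they shrink the radius geometrically). Hence infinitely many iterations
improve `η` by at least `β₀ c min (δ K) (γ₃ δ̄)`, which is impossible for a convergent `η`.
-/

open Filter Topology

lemma min_le_of_min_le_succ {α : Type*} [LinearOrder α] {u : ℕ → α} {b : α} {K : ℕ}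
    (h : ∀ k, K ≤ k → min (u k) b ≤ u (k + 1)) : ∀ k, K ≤ k → min (u K) b ≤ u k := by
  intro k hk
  induction k, hk using Nat.le_induction with
  | base => exact min_le_left _ _
  | succ k hk ih => exact (le_min ih (min_le_right _ _)).trans (h k hk)

lemma eventually_succ_sub_lt_of_tendsto {u : ℕ → ℝ} {L a : ℝ} (hu : Tendsto u atTop (𝓝 L))
    (ha : 0 < a) : ∀ᶠ k in atTop, u (k + 1) - u k < a := by
  have hdiff : Tendsto (fun k ↦ u (k + 1) - u k) atTop (𝓝 0) := by
    simpa using (hu.comp (tendsto_add_atTop_nat 1)).sub hu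
  exact hdiff.eventually (gt_mem_nhds ha)

section TrustRegion

variable {δ r : ℕ → ℝ} {β0 β1 γ1 γ2 γ3 C : ℝ} {K : ℕ}

lemma radius_gt_of_ratio_lt (hC : 0 < C) (hratio : ∀ k, K ≤ k → r k ≥ 1 - C * δ k)
    {k : ℕ} (hk : K ≤ k) (hr : r k < β1) : (1 - β1) / C < δ k := by
  rw [div_lt_iff₀ hC]
  linarith [hratio k hk]

variable (hupdate : ∀ k, δ (k + 1) =
      if β1 ≤ r k then γ1 * δ k else if β0 ≤ r k then γ2 * δ k else γ3 * δ k)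
include hupdate

lemma mul_radius_le_radius_succ (hδpos : ∀ k, 0 < δ k) (hγ32 : γ3 < γ2) (hγ2 : γ2 ≤ 1)
    (hγ1 : 1 < γ1) (k : ℕ) : γ3 * δ k ≤ δ (k + 1) := by
  have hδ := hδpos k
  rw [hupdate k]
  split_ifs <;> nlinarith

lemma min_le_radius (hC : 0 < C) (hδpos : ∀ k, 0 < δ k) (hγ3 : 0 < γ3) (hγ32 : γ3 < γ2)
    (hγ2 : γ2 ≤ 1) (hγ1 : 1 < γ1) (hratio : ∀ k, K ≤ k → r k ≥ 1 - C * δ k) :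
    ∀ k, K ≤ k → min (δ K) (γ3 * ((1 - β1) / C)) ≤ δ k := by
  refine min_le_of_min_le_succ fun k hk ↦ ?_
  by_cases hr : β1 ≤ r k
  · have hδ := hδpos k
    have hgrow : δ (k + 1) = γ1 * δ k := by rw [hupdate k, if_pos hr]
    exact (min_le_left _ _).trans (by nlinarith)
  · calc min (δ k) (γ3 * ((1 - β1) / C)) ≤ γ3 * ((1 - β1) / C) := min_le_right _ _
      _ ≤ γ3 * δ k := by gcongr; exact (radius_gt_of_ratio_lt hC hratio hk (not_le.1 hr)).le
      _ ≤ δ (k + 1) := mul_radius_le_radius_succ hupdate hδpos hγ32 hγ2 hγ1 k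

lemma frequently_le_ratio (hC : 0 < C) (hβ01 : β0 < β1) (hβ1 : β1 < 1) (hγ3 : 0 < γ3)
    (hγ32 : γ3 < γ2) (hγ2 : γ2 ≤ 1) (hratio : ∀ k, K ≤ k → r k ≥ 1 - C * δ k) :
    ∃ᶠ k in atTop, β0 ≤ r k := by
  intro hfail
  obtain ⟨m, hm⟩ := eventually_atTop.1 (hfail.and (eventually_ge_atTop K))
  have hshrink : ∀ k, m ≤ k → δ (k + 1) = γ3 * δ k := fun k hk ↦ by
    have hr := not_le.1 (hm k hk).1
    rw [hupdate k, if_neg (by linarith), if_neg hr.not_ge]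
  have hdecay (n : ℕ) : δ (m + n) ≤ γ3 ^ n * δ m :=
    le_geom (u := fun n ↦ δ (m + n)) hγ3.le n fun k _ ↦ (hshrink (m + k) (by omega)).le
  have hlim : Tendsto (fun n ↦ γ3 ^ n * δ m) atTop (𝓝 0) := by
    simpa using (tendsto_pow_atTop_nhds_zero_of_lt_one hγ3.le (by linarith)).mul_const (δ m)
  obtain ⟨n, hn⟩ := (hlim.eventually (gt_mem_nhds (div_pos (sub_pos.2 hβ1) hC))).exists
  obtain ⟨hr, hK⟩ := hm (m + n) (by omega)
  have hr' : r (m + n) < β1 := by linarith [not_le.1 hr]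
  linarith [hdecay n, radius_gt_of_ratio_lt hC hratio hK hr']

end TrustRegion

/-- Abstract trust-region contradiction: a nondecreasing, bounded-above
objective sequence with the three-branch radius update rule cannot persistently satisfy both
the per-step improvement bound (i) and the ratio lower bound (ii) for all large `k`. -/
theorem stmt11 (η δ r : ℕ → ℝ) (β0 β1 γ1 γ2 γ3 c C : ℝ) (K : ℕ)
    (hβ0 : 0 < β0) (hβ01 : β0 < β1) (hβ1 : β1 < 1)
    (hγ3 : 0 < γ3) (hγ32 : γ3 < γ2) (hγ2 : γ2 ≤ 1) (hγ1 : 1 < γ1)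
    (hc : 0 < c) (hC : 0 < C)
    (hδpos : ∀ k, 0 < δ k)
    (hmono : Monotone η) (hbdd : ∃ B, ∀ k, η k ≤ B)
    (hupdate : ∀ k, δ (k+1) =
      if β1 ≤ r k then γ1 * δ k else if β0 ≤ r k then γ2 * δ k else γ3 * δ k)
    (himp : ∀ k, K ≤ k → β0 ≤ r k → η (k+1) - η k ≥ β0 * c * δ k)
    (hratio : ∀ k, K ≤ k → r k ≥ 1 - C * δ k) :
    False := by
  set ε := min (δ K) (γ3 * ((1 - β1) / C))
  have hε : 0 < ε := lt_min (hδpos K) (mul_pos hγ3 (div_pos (by linarith) hC))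
  have hlim : Tendsto η atTop (𝓝 (⨆ k, η k)) := by
    obtain ⟨B, hB⟩ := hbdd
    exact tendsto_atTop_ciSup hmono ⟨B, Set.forall_mem_range.2 hB⟩
  obtain ⟨k, ⟨hr, hK⟩, hsmall⟩ :=
    (((frequently_le_ratio hupdate hC hβ01 hβ1 hγ3 hγ32 hγ2 hratio).and_eventually
      (eventually_ge_atTop K)).and_eventually
      (eventually_succ_sub_lt_of_tendsto hlim (mul_pos (mul_pos hβ0 hc) hε))).exists
  have hradius : ε ≤ δ k := min_le_radius hupdate hC hδpos hγ3 hγ32 hγ2 hγ1 hratio k hK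
  have hgain : β0 * c * ε ≤ β0 * c * δ k := by gcongr
  linarith [himp k hK hr]
end

section
/- Cauchy-point improvement for Gaussian-mean trust region: let L(μ) be twice continuously differentiable on the trust region B_k = {μ : E_{s∼ρ_k} D_KL(N(μ_k(s),Σ_k) ‖ N(μ(s),Σ_k)) ≤ δ_k}, with ‖∇²L(μ)‖ ≤ h_k on B_k, g_k = ∇L(μ_k) ≠ 0, and σ^(i)_k ≥ σ̲ > 0. Then the maximizer μ_{k+1} of L over B_k satisfies L(μ_{k+1}) − L(μ_k) ≥ ‖g_k‖² · min( 1/(2h_k), σ̲√δ_k/(2‖g_k‖) ). -/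
/-!
Let `r = σ̲ √δ`. Since every `σ_i ≥ σ̲`, the Euclidean ball of radius `r` around `μ_k` lies
in the KL trust region, and on it the Hessian bound gives the quadratic lower model
`L y ≥ L μ_k + ⟪g, y - μ_k⟫ - h/2 ‖y - μ_k‖²`. At the Cauchy point `μ_k + τ g`,
`τ = min (1/h) (r/‖g‖)`, the model predicts the increase `τ ‖g‖² (1 - hτ/2) ≥ τ ‖g‖² / 2`,
and `τ / 2` is exactly the minimum in the claim; the maximizer does at least as well.
-/

open Set Metric

section Taylor

variable {E F : Type*} [NormedAddCommGroup E] [NormedSpace ℝ E]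
  [NormedAddCommGroup F] [NormedSpace ℝ F] {f : E → F} {x y : E} {C : ℝ}

theorem norm_image_sub_sub_fderiv_le_of_norm_fderiv_sub_le
    (hf : ∀ z ∈ segment ℝ x y, DifferentiableAt ℝ f z)
    (hlip : ∀ z ∈ segment ℝ x y, ‖fderiv ℝ f z - fderiv ℝ f x‖ ≤ C * ‖z - x‖) :
    ‖f y - f x - fderiv ℝ f x (y - x)‖ ≤ C / 2 * ‖y - x‖ ^ 2 := by
  set v := y - x
  have hmem : ∀ t ∈ Icc (0 : ℝ) 1, x + t • v ∈ segment ℝ x y := fun t ht => by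
    rw [segment_eq_image']; exact ⟨t, ht, rfl⟩
  -- `t ↦ f (x + t • v) - f x - t • f' x v` vanishes at `0` and its derivative has norm
  -- at most `C t ‖v‖²`, so it is fenced by `C t² ‖v‖² / 2`.
  have hderiv : ∀ t ∈ Icc (0 : ℝ) 1,
      HasDerivAt (fun t : ℝ => f (x + t • v) - f x - t • fderiv ℝ f x v)
        (fderiv ℝ f (x + t • v) v - fderiv ℝ f x v) t := fun t ht => by
    have hline : HasDerivAt (fun t : ℝ => x + t • v) v t := by
      simpa using ((hasDerivAt_id t).smul_const v).const_add x
    have := (((hf _ (hmem t ht)).hasFDerivAt.comp_hasDerivAt t hline).sub_const (f x)).sub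
      ((hasDerivAt_id t).smul_const (fderiv ℝ f x v))
    rwa [one_smul] at this
  have key := image_norm_le_of_norm_deriv_right_le_deriv_boundary
    (f := fun t : ℝ => f (x + t • v) - f x - t • fderiv ℝ f x v)
    (B := fun t => C / 2 * t ^ 2 * ‖v‖ ^ 2) (B' := fun t => C * t * ‖v‖ ^ 2)
    (fun t ht => (hderiv t ht).continuousAt.continuousWithinAt)
    (fun t ht => (hderiv t (Ico_subset_Icc_self ht)).hasDerivWithinAt) (by simp)
    (fun t => (((hasDerivAt_pow 2 t).const_mul (C / 2)).mul_const (‖v‖ ^ 2)).congr_deriv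
      (by push_cast; ring))
    (fun t ht => by
      have ht' := Ico_subset_Icc_self ht
      calc ‖fderiv ℝ f (x + t • v) v - fderiv ℝ f x v‖
          = ‖(fderiv ℝ f (x + t • v) - fderiv ℝ f x) v‖ := rfl
        _ ≤ ‖fderiv ℝ f (x + t • v) - fderiv ℝ f x‖ * ‖v‖ :=
          ContinuousLinearMap.le_opNorm _ _
        _ ≤ C * ‖x + t • v - x‖ * ‖v‖ := by gcongr; exact hlip _ (hmem t ht')
        _ = C * t * ‖v‖ ^ 2 := by
          rw [add_sub_cancel_left, norm_smul, Real.norm_of_nonneg ht'.1]; ring)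
    (right_mem_Icc.2 zero_le_one)
  simpa [v] using key

theorem Convex.norm_image_sub_sub_fderiv_le {s : Set E} (hs : Convex ℝ s)
    (hf : ∀ z ∈ s, DifferentiableAt ℝ f z)
    (hf' : ∀ z ∈ s, DifferentiableAt ℝ (fderiv ℝ f) z)
    (bound : ∀ z ∈ s, ‖fderiv ℝ (fderiv ℝ f) z‖ ≤ C) (hx : x ∈ s) (hy : y ∈ s) :
    ‖f y - f x - fderiv ℝ f x (y - x)‖ ≤ C / 2 * ‖y - x‖ ^ 2 := by
  have hseg := hs.segment_subset hx hy
  exact norm_image_sub_sub_fderiv_le_of_norm_fderiv_sub_le (fun z hz => hf z (hseg hz))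
    fun z hz => hs.norm_image_sub_le_of_norm_fderiv_le hf' bound hx (hseg hz)

end Taylor

theorem norm_fderiv_fderiv_eq_norm_iteratedFDeriv_two {E F : Type*} [NormedAddCommGroup E]
    [NormedSpace ℝ E] [NormedAddCommGroup F] [NormedSpace ℝ F] (f : E → F) (x : E) :
    ‖fderiv ℝ (fderiv ℝ f) x‖ = ‖iteratedFDeriv ℝ 2 f x‖ := by
  rw [← norm_iteratedFDeriv_one, norm_iteratedFDeriv_fderiv]

section InnerProduct

variable {E : Type*} [NormedAddCommGroup E] [InnerProductSpace ℝ E]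

theorem fderiv_apply_eq_inner_gradient [CompleteSpace E] (f : E → ℝ) (x v : E) :
    fderiv ℝ f x v = inner ℝ (gradient f x) v := by
  rw [← InnerProductSpace.toDual_apply_apply, toDual_gradient]

theorem Convex.add_inner_gradient_sub_le_of_norm_iteratedFDeriv_two_le [CompleteSpace E]
    {f : E → ℝ} {s : Set E} {x y : E} {C : ℝ} (hs : Convex ℝ s) (hf : ContDiff ℝ 2 f)
    (bound : ∀ z ∈ s, ‖iteratedFDeriv ℝ 2 f z‖ ≤ C) (hx : x ∈ s) (hy : y ∈ s) :
    f x + inner ℝ (gradient f x) (y - x) - C / 2 * ‖y - x‖ ^ 2 ≤ f y := by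
  have hf' : ContDiff ℝ 1 (fderiv ℝ f) := hf.fderiv_right (by norm_num)
  have htaylor := hs.norm_image_sub_sub_fderiv_le
    (fun z _ => (hf.differentiable (by norm_num)).differentiableAt)
    (fun z _ => (hf'.differentiable (by norm_num)).differentiableAt)
    (fun z hz => (norm_fderiv_fderiv_eq_norm_iteratedFDeriv_two f z).trans_le (bound z hz))
    hx hy
  rw [fderiv_apply_eq_inner_gradient, Real.norm_eq_abs] at htaylor
  linarith [neg_abs_le (f y - f x - inner ℝ (gradient f x) (y - x))]

theorem exists_mem_closedBall_le_sub_of_quadratic_lower_bound {f : E → ℝ} {x g : E}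
    {r h : ℝ} (hr : 0 ≤ r) (hh : 0 < h)
    (hf : ∀ y ∈ closedBall x r, f x + inner ℝ g (y - x) - h / 2 * ‖y - x‖ ^ 2 ≤ f y) :
    ∃ y ∈ closedBall x r, ‖g‖ ^ 2 * min (1 / (2 * h)) (r / (2 * ‖g‖)) ≤ f y - f x := by
  set τ := min (1 / h) (r / ‖g‖)
  have hτ : 0 ≤ τ := le_min (by positivity) (by positivity)
  have hhτ : h * τ ≤ 1 := (le_div_iff₀' hh).1 (min_le_left _ _)
  have hstep : ‖x + τ • g - x‖ = τ * ‖g‖ := by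
    rw [add_sub_cancel_left, norm_smul, Real.norm_of_nonneg hτ]
  have hmem : x + τ • g ∈ closedBall x r := by
    rw [mem_closedBall, dist_eq_norm, hstep]
    exact mul_le_of_le_div₀ hr (norm_nonneg g) (min_le_right _ _)
  refine ⟨_, hmem, ?_⟩
  have hmin : min (1 / (2 * h)) (r / (2 * ‖g‖)) = τ / 2 := by
    rw [← min_div_div_right zero_le_two]; ring_nf
  have hquad := hf _ hmem
  rw [hstep, add_sub_cancel_left, real_inner_smul_right, real_inner_self_eq_norm_sq] at hquad
  rw [hmin]
  nlinarith [mul_nonneg hτ (sq_nonneg ‖g‖)]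

end InnerProduct

section Ellipsoid

variable {ι : Type*} [Fintype ι] {σ : ι → ℝ} {σlb : ℝ}

theorem sum_sq_div_sq_le_sq_norm_div (v : EuclideanSpace ℝ ι) (hσlb : 0 < σlb)
    (hσ : ∀ i, σlb ≤ σ i) :
    ∑ i, v i ^ 2 / σ i ^ 2 ≤ ‖v‖ ^ 2 / σlb ^ 2 := by
  simp only [EuclideanSpace.norm_sq_eq, Real.norm_eq_abs, sq_abs, Finset.sum_div]
  gcongr with i
  exact hσ i

theorem closedBall_subset_setOf_sum_sq_div_sq_le (c : EuclideanSpace ℝ ι) {δ : ℝ}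
    (hσlb : 0 < σlb) (hσ : ∀ i, σlb ≤ σ i) (hδ : 0 ≤ δ) :
    closedBall c (σlb * Real.sqrt δ) ⊆ {μ | (1/2) * ∑ i, (μ i - c i)^2 / (σ i)^2 ≤ δ} := by
  intro μ hμ
  rw [mem_closedBall, dist_eq_norm] at hμ
  have hsq : ‖μ - c‖ ^ 2 ≤ σlb ^ 2 * δ := by
    calc ‖μ - c‖ ^ 2 ≤ (σlb * Real.sqrt δ) ^ 2 := by gcongr
      _ = σlb ^ 2 * δ := by rw [mul_pow, Real.sq_sqrt hδ]
  have hsum := sum_sq_div_sq_le_sq_norm_div (μ - c) hσlb hσ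
  simp only [PiLp.sub_apply] at hsum
  have : ‖μ - c‖ ^ 2 / σlb ^ 2 ≤ δ := by rwa [div_le_iff₀' (by positivity)]
  show (1/2) * _ ≤ δ
  linarith

end Ellipsoid

theorem stmt15_general {n : ℕ} (L : EuclideanSpace ℝ (Fin n) → ℝ)
    (μk μk1 : EuclideanSpace ℝ (Fin n)) (σ : Fin n → ℝ) (σlb δ h : ℝ)
    (hσlb : 0 < σlb) (hσ : ∀ i, σlb ≤ σ i) (hδ : 0 < δ) (hh : 0 < h)
    (B : Set (EuclideanSpace ℝ (Fin n)))
    (hB : B = {μ | (1/2) * ∑ i, (μ i - μk i)^2 / (σ i)^2 ≤ δ})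
    (hC2 : ContDiff ℝ 2 L)
    (hHess : ∀ μ ∈ B, ‖iteratedFDeriv ℝ 2 L μ‖ ≤ h)
    (hmax : ∀ μ ∈ B, L μ ≤ L μk1) :
    L μk1 - L μk ≥ ‖gradient L μk‖^2 *
      min (1/(2*h)) (σlb * Real.sqrt δ / (2 * ‖gradient L μk‖)) := by
  have hball : closedBall μk (σlb * Real.sqrt δ) ⊆ B :=
    hB ▸ closedBall_subset_setOf_sum_sq_div_sq_le μk hσlb hσ hδ.le
  have hmodel : ∀ y ∈ closedBall μk (σlb * Real.sqrt δ),
      L μk + inner ℝ (gradient L μk) (y - μk) - h / 2 * ‖y - μk‖ ^ 2 ≤ L y := fun y hy =>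
    (convex_closedBall μk _).add_inner_gradient_sub_le_of_norm_iteratedFDeriv_two_le hC2
      (fun z hz => hHess z (hball hz)) (mem_closedBall_self (by positivity)) hy
  obtain ⟨μ, hμ, hincrease⟩ :=
    exists_mem_closedBall_le_sub_of_quadratic_lower_bound (by positivity) hh hmodel
  linarith [hmax μ (hball hμ)]

/-- Cauchy-point improvement for the Gaussian-mean trust region: if `L` is
twice continuously differentiable on the KL-ball `B`, with Hessian bounded by `h` on `B`,
nonzero gradient `g_k` at `μ_k`, and `σ^(i) ≥ σ̲ > 0`, then the maximizer `μ_{k+1}` of `L`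
over `B` satisfies
`L(μ_{k+1}) − L(μ_k) ≥ ‖g_k‖² · min(1/(2h), σ̲√δ/(2‖g_k‖))`. -/
theorem stmt15 {n : ℕ} (L : EuclideanSpace ℝ (Fin n) → ℝ)
    (μk μk1 : EuclideanSpace ℝ (Fin n)) (σ : Fin n → ℝ) (σlb δ h : ℝ)
    (hσlb : 0 < σlb) (hσ : ∀ i, σlb ≤ σ i) (hδ : 0 < δ) (hh : 0 < h)
    (B : Set (EuclideanSpace ℝ (Fin n)))
    (hB : B = {μ | (1/2) * ∑ i, (μ i - μk i)^2 / (σ i)^2 ≤ δ})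
    (hC2 : ContDiff ℝ 2 L)
    (hHess : ∀ μ ∈ B, ‖iteratedFDeriv ℝ 2 L μ‖ ≤ h)
    (hg : gradient L μk ≠ 0)
    (hmem : μk1 ∈ B) (hmax : ∀ μ ∈ B, L μ ≤ L μk1) :
    L μk1 - L μk ≥ ‖gradient L μk‖^2 *
      min (1/(2*h)) (σlb * Real.sqrt δ / (2 * ‖gradient L μk‖)) :=
  stmt15_general L μk μk1 σ σlb δ h hσlb hσ hδ hh B hB hC2 hHess hmax
end

section
/- Ratio bound for Gaussian policies: under Assumptions on the Gaussian parameterization (σ bounded below by σ̲) and bounded Hessian (h_k), and assuming the TRPO surrogate bound η(μ_{k+1},σ_{k+1}) ≥ L_{μ_k,σ_k}(μ_{k+1},σ_{k+1}) − 4Ā_kγδ_k²/(p_0²(1−γ)²) together with the sufficient-increase bound L_{μ_k,σ_k}(μ_{k+1},σ_{k+1}) − L_{μ_k,σ_k}(μ_k,σ_k) ≥ ‖g_k‖² min(1/(2h_k), σ̲√δ_k/(2‖g_k‖)) > 0, the ratio r_k satisfies r_k ≥ 1 − 8Ā_kγδ_k² max(‖g_k‖/(σ̲√δ_k), h_k)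 / (p_0²(1−γ)²‖g_k‖²). -/
/-!
Write `D = L_{k+1} - L_k` for the improvement of the surrogate and `B = 4Āγδ²/(p₀²(1-γ)²)` for
the surrogate error. The surrogate bound gives `η_{k+1} - η_k ≥ D - B`, hence `r_k ≥ 1 - B/D`,
and the sufficient-increase bound `D ≥ c > 0` weakens this to `r_k ≥ 1 - B/c`. Since
`min (1/a) (1/b) = 1 / max a b`, the step-size bound is `c = ‖g‖² / (2 max(‖g‖/(σ̲√δ), h))`,
and `B/c` is exactly the subtracted term.
-/

theorem one_div_max_eq_min {α : Type*} [Field α] [LinearOrder α] [IsStrictOrderedRing α]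
    {a b : α} (ha : 0 < a) (hb : 0 < b) : 1 / max a b = min (1 / a) (1 / b) := by
  rcases le_total a b with hab | hab
  · rw [max_eq_right hab, min_eq_right (one_div_le_one_div_of_le ha hab)]
  · rw [max_eq_left hab, min_eq_left (one_div_le_one_div_of_le hb hab)]

theorem one_sub_div_le_div_of_sub_le_s17 {α : Type*} [Field α] [LinearOrder α]
    [IsStrictOrderedRing α] {gain D B c : α} (hB : 0 ≤ B) (hc : 0 < c) (hcD : c ≤ D)
    (hgain : D - B ≤ gain) : 1 - B / c ≤ gain / D := by
  have hD : 0 < D := hc.trans_le hcD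
  calc 1 - B / c ≤ 1 - B / D := sub_le_sub_left (div_le_div_of_nonneg_left hB hc hcD) 1
    _ = (D - B) / D := one_sub_div hD.ne'
    _ ≤ gain / D := div_le_div_of_nonneg_right hgain hD.le

theorem min_one_div_two_mul_div_two_mul {h g s : ℝ} (hh : 0 < h) (hg : 0 < g) (hs : 0 < s) :
    min (1 / (2 * h)) (s / (2 * g)) = 1 / (2 * max (g / s) h) := by
  rw [mul_max_of_nonneg _ _ zero_le_two, one_div_max_eq_min (by positivity) (by positivity),
    min_comm]
  congr 1
  field_simp

theorem stmt17_general (ηk ηk1 Lk Lk1 Abar γ δ p0 g σlb h : ℝ)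
    (hγ0 : 0 < γ) (hAbar : 0 ≤ Abar)
    (hg : 0 < g) (hσ : 0 < σlb) (hh : 0 < h) (hδ : 0 < δ)
    (hLη : Lk = ηk)
    (hsurr : ηk1 ≥ Lk1 - 4 * Abar * γ * δ^2 / (p0^2 * (1 - γ)^2))
    (himp : Lk1 - Lk ≥ g^2 * min (1/(2*h)) (σlb * Real.sqrt δ / (2*g)))
    (hpos : 0 < g^2 * min (1/(2*h)) (σlb * Real.sqrt δ / (2*g))) :
    (ηk1 - ηk) / (Lk1 - Lk) ≥
      1 - 8 * Abar * γ * δ^2 * max (g / (σlb * Real.sqrt δ)) h /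
        (p0^2 * (1 - γ)^2 * g^2) := by
  have hs : 0 < σlb * Real.sqrt δ := mul_pos hσ (Real.sqrt_pos.mpr hδ)
  rw [min_one_div_two_mul_div_two_mul hh hg hs] at himp hpos
  have hratio := one_sub_div_le_div_of_sub_le_s17 (gain := ηk1 - ηk)
    (B := 4 * Abar * γ * δ^2 / (p0^2 * (1 - γ)^2)) (by positivity) hpos himp
    (by rw [hLη]; linarith)
  calc 1 - 8 * Abar * γ * δ^2 * max (g / (σlb * Real.sqrt δ)) h / (p0^2 * (1 - γ)^2 * g^2)
      = 1 - 4 * Abar * γ * δ^2 / (p0^2 * (1 - γ)^2) /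
          (g^2 * (1 / (2 * max (g / (σlb * Real.sqrt δ)) h))) := by
        rw [mul_one_div, div_div_eq_mul_div]
        generalize p0^2 * (1 - γ)^2 = P
        ring
    _ ≤ (ηk1 - ηk) / (Lk1 - Lk) := hratio

/-- Ratio bound for Gaussian policies: under the TRPO surrogate bound and
the sufficient-increase bound, the trust region ratio satisfies
`r_k ≥ 1 − 8Ā_kγδ_k² max(‖g_k‖/(σ̲√δ_k), h_k) / (p0²(1−γ)²‖g_k‖²)`. -/
theorem stmt17 (ηk ηk1 Lk Lk1 Abar γ δ p0 g σlb h : ℝ)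
    (hγ0 : 0 < γ) (hγ1 : γ < 1) (hp0 : 0 < p0) (hAbar : 0 ≤ Abar)
    (hg : 0 < g) (hσ : 0 < σlb) (hh : 0 < h) (hδ : 0 < δ)
    (hLη : Lk = ηk)
    (hsurr : ηk1 ≥ Lk1 - 4 * Abar * γ * δ^2 / (p0^2 * (1 - γ)^2))
    (himp : Lk1 - Lk ≥ g^2 * min (1/(2*h)) (σlb * Real.sqrt δ / (2*g)))
    (hpos : 0 < g^2 * min (1/(2*h)) (σlb * Real.sqrt δ / (2*g))) :
    (ηk1 - ηk) / (Lk1 - Lk) ≥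
      1 - 8 * Abar * γ * δ^2 * max (g / (σlb * Real.sqrt δ)) h /
        (p0^2 * (1 - γ)^2 * g^2) :=
  stmt17_general ηk ηk1 Lk Lk1 Abar γ δ p0 g σlb h hγ0 hAbar hg hσ hh hδ hLη hsurr himp hpos
end

section
/- Abstract convergence of gradient norms along successful trust-region iterates: let {η_k} be nondecreasing and bounded above, suppose on every successful iteration q one has η_{q+1} − η_q ≥ β0 min(ε²/(2h), σ̲ε√δ_q/2) whenever ‖g_q‖ ≥ ε, that ‖μ_{q+1} − μ_q‖ ≤ 2σ̄√δ_q (steps bounded by the radius), and that g is Lipschitz in μ. If lim inf ‖g_k‖ = 0 but lim sup ‖g_k‖ ≥ 2ε > 0, then summing improvements between indices k_i (where ‖g_{k_i}‖ ≥ 2ε) and t_i (first later successful index with ‖g_{t_i}‖ ≤ ε) forces ‖μ_{t_i} − μ_{k_i}‖ → 0 and hence ‖g_{t_i} − g_{k_i}‖ → 0, contradicting ‖g_{t_i} − g_{k_i}‖ ≥ ε. Therefore lim_{k→∞} ‖g_k‖ = 0. -/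
/-!
Once `η` has almost converged, every successful step taken while `‖g‖ ≥ ε` lies in the regime
where the sufficient increase is `β0 σ̲ ε √δ_q / 2`, so the length `2 σ̄ √δ_q` of the step is a
fixed multiple of the increase of `η`. Summing, the iterates move by at most a multiple of the
total remaining increase of `η` along any stretch on which `‖g‖ ≥ ε`, and by the Lipschitz bound
`‖g‖` then changes by less than `ε` along such a stretch. Since `‖g‖` drops below any level
infinitely often, it can no longer climb from below `ε` to `2ε`.
-/

open Filter Topology

def SlowWhileAbove (u : ℕ → ℝ) : Prop :=
  ∀ ε > 0, ∃ N, ∀ k t, N ≤ k → k ≤ t → (∀ q, k ≤ q → q < t → ε ≤ u q) → |u t - u k| < ε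

namespace SlowWhileAbove

variable {u : ℕ → ℝ}

theorem frequently_lt (hu : SlowWhileAbove u) (hliminf : liminf u atTop = 0)
    {ε : ℝ} (hε : 0 < ε) : ∃ᶠ n in atTop, u n < ε := by
  by_contra hlarge
  obtain ⟨n₀, hn₀⟩ := eventually_atTop.1 (not_frequently.1 hlarge)
  obtain ⟨N, hN⟩ := hu ε hε
  set K := max N n₀
  -- without this, `liminf u = 0` could be the junk value of an unbounded sequence
  have hbdd : IsBoundedUnder (· ≤ ·) atTop u := by
    refine ⟨u K + ε, eventually_map.2 (eventually_atTop.2 ⟨K, fun t hKt => ?_⟩)⟩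
    have := hN K t (le_max_left _ _) hKt
      fun q hKq _ => not_lt.1 (hn₀ q ((le_max_right _ _).trans hKq))
    linarith [le_abs_self (u t - u K)]
  have : ε ≤ liminf u atTop :=
    le_liminf_of_le hbdd.isCoboundedUnder_ge
      (eventually_atTop.2 ⟨n₀, fun n hn => not_lt.1 (hn₀ n hn)⟩)
  linarith

theorem tendsto_zero (hu : SlowWhileAbove u) (hnonneg : ∀ n, 0 ≤ u n)
    (hliminf : liminf u atTop = 0) : Tendsto u atTop (𝓝 0) := by
  rw [Metric.tendsto_atTop]
  intro ε hε
  obtain ⟨N, hN⟩ := hu (ε / 2) (half_pos hε)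
  refine ⟨N, fun k hk => ?_⟩
  rw [Real.dist_0_eq_abs, abs_of_nonneg (hnonneg k)]
  by_contra! hk_large
  have hdrop : ∃ t, k ≤ t ∧ u t < ε / 2 :=
    frequently_atTop.1 (hu.frequently_lt hliminf (half_pos hε)) k
  obtain ⟨hkt, hsmall⟩ := Nat.find_spec hdrop
  have := hN k (Nat.find hdrop) hk hkt
    fun q hkq hq => not_lt.1 fun h => Nat.find_min hdrop hq ⟨hkq, h⟩
  linarith [neg_abs_le (u (Nat.find hdrop) - u k)]

end SlowWhileAbove

theorem norm_sub_le_mul_sub_of_forall_norm_step_le {E : Type*} [SeminormedAddCommGroup E]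
    {f : ℕ → E} {η : ℕ → ℝ} {C : ℝ} {a b : ℕ} (hab : a ≤ b)
    (hstep : ∀ q, a ≤ q → q < b → ‖f (q + 1) - f q‖ ≤ C * (η (q + 1) - η q)) :
    ‖f b - f a‖ ≤ C * (η b - η a) := by
  rw [← dist_eq_norm, dist_comm, ← Finset.sum_Ico_sub η hab, Finset.mul_sum]
  exact dist_le_Ico_sum_of_dist_le hab fun hq hqb => by
    rw [dist_comm, dist_eq_norm]
    exact hstep _ hq hqb

theorem slowWhileAbove_norm_of_norm_step_le {E F : Type*} [SeminormedAddCommGroup E]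
    [SeminormedAddCommGroup F] {η : ℕ → ℝ} {μ : ℕ → E} {g : ℕ → F} {Lip : ℝ} (hLip : 0 < Lip)
    (hη : CauchySeq η) (hLipg : ∀ j k, ‖g j - g k‖ ≤ Lip * ‖μ j - μ k‖)
    (hstep : ∀ ε > 0, ∃ C > 0, ∃ d > 0, ∀ q, ε ≤ ‖g q‖ → η (q + 1) - η q < d →
      ‖μ (q + 1) - μ q‖ ≤ C * (η (q + 1) - η q)) :
    SlowWhileAbove fun n => ‖g n‖ := by
  intro ε hε
  obtain ⟨C, hC, d, hd, hstepε⟩ := hstep ε hε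
  obtain ⟨N, hN⟩ := Metric.cauchySeq_iff.1 hη (min d (ε / (Lip * C))) (by positivity)
  have hclose : ∀ m ≥ N, ∀ n ≥ N, η m - η n < min d (ε / (Lip * C)) := fun m hm n hn =>
    (le_abs_self _).trans_lt (hN m hm n hn)
  refine ⟨N, fun k t hk hkt hlarge => ?_⟩
  have hμ : ‖μ t - μ k‖ ≤ C * (η t - η k) :=
    norm_sub_le_mul_sub_of_forall_norm_step_le hkt fun q hkq hqt => hstepε q (hlarge q hkq hqt)
      ((hclose _ (by omega) _ (by omega)).trans_le (min_le_left _ _))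
  calc |‖g t‖ - ‖g k‖| ≤ ‖g t - g k‖ := abs_norm_sub_norm_le _ _
    _ ≤ Lip * ‖μ t - μ k‖ := hLipg t k
    _ ≤ Lip * (C * (η t - η k)) := by gcongr
    _ < Lip * (C * (ε / (Lip * C))) := by
      gcongr
      exact (hclose t (hk.trans hkt) k hk).trans_le (min_le_right _ _)
    _ = ε := by field_simp

theorem mul_le_of_mul_min_le_of_lt {β A B x : ℝ} (hmin : β * min A B ≤ x) (hx : x < β * A) :
    β * B ≤ x := by
  rcases min_choice A B with h | h
  · rw [h] at hmin
    exact absurd hmin (not_le.2 hx)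
  · rwa [h] at hmin

theorem norm_step_le_of_sufficient_increase {E F : Type*} [SeminormedAddCommGroup E]
    [SeminormedAddCommGroup F] {η : ℕ → ℝ} {μ : ℕ → E} {g : ℕ → F} {δ : ℕ → ℝ}
    {Succ : ℕ → Prop} {β0 σlb σub ε A : ℝ} (hβ0 : 0 < β0) (hσlb : 0 < σlb) (hσub : 0 ≤ σub)
    (hε : 0 < ε) (hmono : Monotone η)
    (himp : ∀ q, Succ q → ε ≤ ‖g q‖ →
      η (q + 1) - η q ≥ β0 * min A (σlb * ε * Real.sqrt (δ q) / 2))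
    (hstep : ∀ q, Succ q → ‖μ (q + 1) - μ q‖ ≤ 2 * σub * Real.sqrt (δ q))
    (hfix : ∀ q, ¬ Succ q → μ (q + 1) = μ q) {q : ℕ} (hgq : ε ≤ ‖g q‖)
    (hinc : η (q + 1) - η q < β0 * A) :
    ‖μ (q + 1) - μ q‖ ≤ 4 * σub / (β0 * σlb * ε) * (η (q + 1) - η q) := by
  by_cases hq : Succ q
  · have hsqrt : β0 * (σlb * ε * Real.sqrt (δ q) / 2) ≤ η (q + 1) - η q :=
      mul_le_of_mul_min_le_of_lt (himp q hq hgq) hinc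
    calc ‖μ (q + 1) - μ q‖ ≤ 2 * σub * Real.sqrt (δ q) := hstep q hq
      _ = 4 * σub / (β0 * σlb * ε) * (β0 * (σlb * ε * Real.sqrt (δ q) / 2)) := by
        field_simp
        ring
      _ ≤ 4 * σub / (β0 * σlb * ε) * (η (q + 1) - η q) := by gcongr
  · rw [hfix q hq, sub_self, norm_zero]
    exact mul_nonneg (by positivity) (sub_nonneg.2 (hmono (Nat.le_succ q)))

theorem stmt19_general {E : Type} [NormedAddCommGroup E]
    (η : ℕ → ℝ) (μ g : ℕ → E) (δ : ℕ → ℝ) (Succ : ℕ → Prop)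
    (β0 h σlb σub Lip : ℝ)
    (hβ0 : 0 < β0) (hh : 0 < h) (hσlb : 0 < σlb) (hσ : σlb ≤ σub) (hLip : 0 < Lip)
    (hmono : Monotone η) (hbdd : ∃ B, ∀ k, η k ≤ B)
    (himp : ∀ ε > 0, ∀ q, Succ q → ε ≤ ‖g q‖ →
      η (q+1) - η q ≥ β0 * min (ε^2 / (2*h)) (σlb * ε * Real.sqrt (δ q) / 2))
    (hstep : ∀ q, Succ q → ‖μ (q+1) - μ q‖ ≤ 2 * σub * Real.sqrt (δ q))
    (hfix : ∀ q, ¬ Succ q → μ (q+1) = μ q)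
    (hLipg : ∀ j k, ‖g j - g k‖ ≤ Lip * ‖μ j - μ k‖)
    (hliminf : Filter.liminf (fun k => ‖g k‖) Filter.atTop = 0) :
    Filter.Tendsto (fun k => ‖g k‖) Filter.atTop (nhds 0) := by
  have hσub : 0 < σub := hσlb.trans_le hσ
  have hbdd' : BddAbove (Set.range η) := by
    obtain ⟨B, hB⟩ := hbdd
    exact ⟨B, Set.forall_mem_range.2 hB⟩
  have hη : CauchySeq η := (tendsto_atTop_ciSup hmono hbdd').cauchySeq
  refine SlowWhileAbove.tendsto_zero ?_ (fun k => norm_nonneg _) hliminf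
  refine slowWhileAbove_norm_of_norm_step_le hLip hη hLipg fun ε hε =>
    ⟨4 * σub / (β0 * σlb * ε), by positivity, β0 * (ε ^ 2 / (2 * h)), by positivity,
      fun q hgq hinc => ?_⟩
  exact norm_step_le_of_sufficient_increase hβ0 hσlb hσub.le hε hmono (himp ε hε) hstep hfix
    hgq hinc

/-- Abstract convergence of gradient norms along successful trust-region
iterates: with a nondecreasing bounded objective, a per-success sufficient increase, steps
bounded by the radius, no movement on unsuccessful iterations, a Lipschitz gradient, and
`lim inf ‖g_k‖ = 0`, one has `lim_{k→∞} ‖g_k‖ = 0`. -/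
theorem stmt19 {E : Type} [NormedAddCommGroup E] [NormedSpace ℝ E]
    (η : ℕ → ℝ) (μ g : ℕ → E) (δ : ℕ → ℝ) (Succ : ℕ → Prop)
    (β0 h σlb σub Lip : ℝ)
    (hβ0 : 0 < β0) (hh : 0 < h) (hσlb : 0 < σlb) (hσ : σlb ≤ σub) (hLip : 0 < Lip)
    (hδ : ∀ k, 0 < δ k)
    (hmono : Monotone η) (hbdd : ∃ B, ∀ k, η k ≤ B)
    (himp : ∀ ε > 0, ∀ q, Succ q → ε ≤ ‖g q‖ →
      η (q+1) - η q ≥ β0 * min (ε^2 / (2*h)) (σlb * ε * Real.sqrt (δ q) / 2))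
    (hstep : ∀ q, Succ q → ‖μ (q+1) - μ q‖ ≤ 2 * σub * Real.sqrt (δ q))
    (hfix : ∀ q, ¬ Succ q → μ (q+1) = μ q)
    (hLipg : ∀ j k, ‖g j - g k‖ ≤ Lip * ‖μ j - μ k‖)
    (hliminf : Filter.liminf (fun k => ‖g k‖) Filter.atTop = 0) :
    Filter.Tendsto (fun k => ‖g k‖) Filter.atTop (nhds 0) :=
  stmt19_general η μ g δ Succ β0 h σlb σub Lip hβ0 hh hσlb hσ hLip hmono hbdd himp hstep hfix hLipg
    hliminf
end
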